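/- Let d ≥ 5, let δ be an integer with 1 ≤ δ ≤ d − δ, and set m = d − δ. Let Z = (z_{ij})_{1≤i≤δ, 1≤j≤m} be a matrix of indeterminates, and let A₊ = O[z_{ij}] / (I₂(Z) + ((T'(Z) + 4π)·z_{ij} : 1≤i≤δ, 1≤j≤m)). Then the annihilator of the image of T'(Z) + 4π in A₊ is exactly the ideal of A₊ generated by the images of all the z_{ij}. -/

import Mathlib

open MvPolynomial

noncomputable section

/-- The ideal `I₂(Z)` generated by all `2 × 2` minors of the matrix of indeterminates. -/
def minors2 (O : Type*) [CommRing O] (δ m : ℕ) : Ideal (MvPolynomial (Fin δ × Fin m) O) :=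
  Ideal.span {f | ∃ (i i' : Fin δ) (j j' : Fin m),
    f = X (i, j) * X (i', j') - X (i, j') * X (i', j)}

/-- The quadratic polynomial `T'(Z) = Σᵢ Σⱼ z_{i,m+1-j} z_{δ+1-i,j}`. -/
def Tpoly (O : Type*) [CommRing O] (δ m : ℕ) : MvPolynomial (Fin δ × Fin m) O :=
  ∑ i : Fin δ, ∑ j : Fin m, X (i, j.rev) * X (i.rev, j)

/-- The ideal defining `A₊`: `I₂(Z) + ((T'(Z) + 4π)·z_{ij} : all i, j)`. -/
def idealAplus (O : Type*) [CommRing O] (π : O) (δ m : ℕ) :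
    Ideal (MvPolynomial (Fin δ × Fin m) O) :=
  minors2 O δ m +
    Ideal.span (Set.range fun ij : Fin δ × Fin m => (Tpoly O δ m + C (4 * π)) * X ij)

lemma constantCoeff_Tpoly (O : Type*) [CommRing O] (δ m : ℕ) :
    constantCoeff (Tpoly O δ m) = 0 := by
  simp [Tpoly]

lemma idealAplus_constantCoeff (O : Type*) [CommRing O] (π : O) (δ m : ℕ)
    {f : MvPolynomial (Fin δ × Fin m) O} (hf : f ∈ idealAplus O π δ m) :
    constantCoeff f = 0 := by
  have h : idealAplus O π δ m ≤ RingHom.ker (constantCoeff (R := O) (σ := Fin δ × Fin m)) := by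
    refine sup_le (Ideal.span_le.2 ?_) (Ideal.span_le.2 ?_)
    · rintro g ⟨i, i', j, j', rfl⟩
      simp [RingHom.mem_ker]
    · rintro g ⟨ij, rfl⟩
      simp [RingHom.mem_ker]
  exact h hf

lemma stmt6_aux (O : Type*) [CommRing O] [IsDomain O] (π : O) (h4π : (4 : O) * π ≠ 0)
    (δ m : ℕ) (a : MvPolynomial (Fin δ × Fin m) O ⧸ idealAplus O π δ m) :
    a * Ideal.Quotient.mk (idealAplus O π δ m) (Tpoly O δ m + C (4 * π)) = 0 ↔
      a ∈ Ideal.span (Set.range fun ij : Fin δ × Fin m =>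
        Ideal.Quotient.mk (idealAplus O π δ m) (X ij)) := by
  let J := idealAplus O π δ m
  let T : MvPolynomial (Fin δ × Fin m) O := Tpoly O δ m + C (4 * π)
  have hTdef : T = Tpoly O δ m + C (4 * π) := rfl
  have hgen : ∀ ij : Fin δ × Fin m, T * X ij ∈ J := fun ij =>
    Ideal.mem_sup_right (Ideal.subset_span ⟨ij, rfl⟩)
  have hmulT : ∀ g ∈ Ideal.span (Set.range (X : Fin δ × Fin m → MvPolynomial (Fin δ × Fin m) O)),
      T * g ∈ J := by
    intro g hg
    induction hg using Submodule.span_induction with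
    | mem x hx => obtain ⟨ij, rfl⟩ := hx; exact hgen ij
    | zero => simpa using J.zero_mem
    | add x y _ _ hx hy => rw [mul_add]; exact J.add_mem hx hy
    | smul r x _ hx =>
        rw [smul_eq_mul, mul_comm r x, ← mul_assoc]
        exact J.mul_mem_right r hx
  constructor
  · intro ha
    obtain ⟨f, rfl⟩ := Ideal.Quotient.mk_surjective a
    rw [← map_mul, Ideal.Quotient.eq_zero_iff_mem] at ha
    set c := constantCoeff f with hc
    have hgmem : f - C c ∈
        Ideal.span (Set.range (X : Fin δ × Fin m → MvPolynomial (Fin δ × Fin m) O)) := by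
      rw [← Set.image_univ, mem_ideal_span_X_image]
      intro mo hmo
      have hne : mo ≠ 0 := by
        rintro rfl
        have : coeff 0 (f - C c) = 0 := by simp [hc, constantCoeff_eq]
        simp [mem_support_iff, this] at hmo
      obtain ⟨i, hi⟩ := Finsupp.ne_iff.1 hne
      exact ⟨i, trivial, by simpa using hi⟩
    have hCc : C c * T ∈ J := by
      have h1 : T * (f - C c) ∈ J := hmulT _ hgmem
      have heq : C c * T = f * T - T * (f - C c) := by ring
      rw [heq]
      exact J.sub_mem ha h1
    have hc0 : c = 0 := by
      have h2 := idealAplus_constantCoeff O π δ m hCc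
      rw [hTdef, map_mul, constantCoeff_C, map_add, constantCoeff_Tpoly, constantCoeff_C,
        zero_add] at h2
      rcases mul_eq_zero.1 h2 with h | h
      · exact h
      · exact absurd h h4π
    have hfmem : f ∈
        Ideal.span (Set.range (X : Fin δ × Fin m → MvPolynomial (Fin δ × Fin m) O)) := by
      have h3 := hgmem
      rw [hc0] at h3
      simpa using h3
    have h4 : Ideal.Quotient.mk J f ∈ Ideal.map (Ideal.Quotient.mk J)
        (Ideal.span (Set.range (X : Fin δ × Fin m → MvPolynomial (Fin δ × Fin m) O))) :=
      Ideal.mem_map_of_mem _ hfmem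
    rwa [Ideal.map_span, ← Set.range_comp] at h4
  · intro ha
    induction ha using Submodule.span_induction with
    | mem x hx =>
        obtain ⟨ij, rfl⟩ := hx
        rw [← map_mul, mul_comm, Ideal.Quotient.eq_zero_iff_mem]
        exact hgen ij
    | zero => simp
    | add x y _ _ hx hy => rw [add_mul, hx, hy, add_zero]
    | smul r x _ hx => rw [smul_eq_mul, mul_assoc, hx, mul_zero]

/-- in `A₊`, the annihilator of the image of `T'(Z) + 4π` is exactly the
ideal generated by the images of all the `z_{ij}`. -/
theorem stmt_6 (O : Type*) [CommRing O] [IsDomain O] [IsDiscreteValuationRing O]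
    [IsAdicComplete (IsLocalRing.maximalIdeal O) O]
    (p : ℕ) [Fact p.Prime] (hp : p ≠ 2)
    [IsAlgClosed (IsLocalRing.ResidueField O)] [CharP (IsLocalRing.ResidueField O) p]
    (π : O) (hπ : Irreducible π)
    (d δ : ℕ) (hd : 5 ≤ d) (hδ1 : 1 ≤ δ) (hδ2 : δ ≤ d - δ) :
    ∀ a : MvPolynomial (Fin δ × Fin (d - δ)) O ⧸ idealAplus O π δ (d - δ),
      a * Ideal.Quotient.mk (idealAplus O π δ (d - δ)) (Tpoly O δ (d - δ) + C (4 * π)) = 0 ↔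
      a ∈ Ideal.span (Set.range fun ij : Fin δ × Fin (d - δ) =>
        Ideal.Quotient.mk (idealAplus O π δ (d - δ)) (X ij)) := by
  have h4 : (4 : O) ≠ 0 := by
    intro h0
    have hres : IsLocalRing.residue O (4 : O) = 0 := by rw [h0, map_zero]
    have hk : ((4 : ℕ) : IsLocalRing.ResidueField O) = 0 := by
      rw [map_ofNat] at hres
      exact_mod_cast hres
    have hdvd : p ∣ 4 := (CharP.cast_eq_zero_iff (IsLocalRing.ResidueField O) p 4).1 hk
    have hP : p.Prime := Fact.out
    have h2 : p ∣ 2 := hP.dvd_of_dvd_pow (show p ∣ 2 ^ 2 by norm_num [hdvd])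
    exact hp ((Nat.prime_dvd_prime_iff_eq hP Nat.prime_two).1 h2)
  exact fun a => stmt6_aux O π (mul_ne_zero h4 hπ.ne_zero) δ (d - δ) a
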